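/- arXiv:2604.11995 — 2 statements merged into one kernel-verified Lean document; each statement's English description precedes it below -/
import Mathlib

section
/- Let E be a real inner product space, Ω ⊆ E an open convex set, and φ : Ω → ℝ a differentiable convex function with gradient ∇φ. Let Z and A be independent Ω-valued random variables on a probability space such that Z, φ(Z), A, φ(A), and ∇φ(A) are integrable (and the cross terms ⟪∇φ(A), Z⟫, ⟪∇φ(A), A⟫ are integrable), with μ := E[Z] ∈ Ω. Then E[D_φ(Z, A)] = E[D_φ(Z, μ)] + E[D_φ(μ, A)]: the expected Bregman loss of a random predictor A on an independent target Z splits into the Bayes error E[D_φ(Z, E[Z])] plus the expected divergence from the target mean to the predictor. -/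
open MeasureTheory ProbabilityTheory
open scoped RealInnerProductSpace Gradient

/-- The Bregman divergence of `φ` with gradient field `g`:
`D_φ(x, y) = φ x − φ y − ⟪∇φ(y), x − y⟫`. -/
noncomputable def bregman {E : Type*} [NormedAddCommGroup E] [InnerProductSpace ℝ E]
    (φ : E → ℝ) (g : E → E) (x y : E) : ℝ :=
  φ x - φ y - ⟪g y, x - y⟫

/-!
The three-point identity `D(z, a) = D(z, m) + D(m, a) + ⟪∇φ(m) − ∇φ(a), z − m⟫` holds pointwise.
Taking `z = Z`, `a = A`, `m = E[Z]` and integrating, the cross term factors by independence into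
`⟪E[∇φ(m) − ∇φ(A)], E[Z] − m⟫ = 0`. Independence passes from `A` to `g(A)` because `g` agrees on
`Ω ∋ A` with `∇φ = toDual⁻¹ ∘ fderiv`, which is Borel measurable even though `g` need not be.
-/

section Bregman

variable {E : Type*} [NormedAddCommGroup E] [InnerProductSpace ℝ E]

theorem bregman_three_point (φ : E → ℝ) (g : E → E) (x y z : E) :
    bregman φ g x z = bregman φ g x y + bregman φ g y z + ⟪g y - g z, x - y⟫ := by
  simp only [bregman, inner_sub_left, inner_sub_right]
  ring

theorem integrable_bregman {α : Type*} [MeasurableSpace α] {P : Measure α}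
    (φ : E → ℝ) (g : E → E) {X Y : α → E}
    (hφX : Integrable (fun ω => φ (X ω)) P) (hφY : Integrable (fun ω => φ (Y ω)) P)
    (hgYX : Integrable (fun ω => ⟪g (Y ω), X ω⟫) P)
    (hgYY : Integrable (fun ω => ⟪g (Y ω), Y ω⟫) P) :
    Integrable (fun ω => bregman φ g (X ω) (Y ω)) P := by
  simp only [bregman, inner_sub_right]
  exact (hφX.sub hφY).sub (hgYX.sub hgYY)

end Bregman

theorem measurable_gradient {𝕜 F : Type*} [RCLike 𝕜] [NormedAddCommGroup F]
    [InnerProductSpace 𝕜 F] [CompleteSpace F] [MeasurableSpace F] [BorelSpace F] (f : F → 𝕜) :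
    Measurable (∇ f) :=
  (InnerProductSpace.toDual 𝕜 F).symm.continuous.measurable.comp (measurable_fderiv 𝕜 f)

namespace ProbabilityTheory

variable {E : Type*} [NormedAddCommGroup E] [InnerProductSpace ℝ E]
  [MeasurableSpace E] [BorelSpace E]
  {α : Type*} [MeasurableSpace α] {P : Measure α} {X Y : α → E}

theorem IndepFun.integrable_inner (hXY : IndepFun X Y P) (hX : Integrable X P)
    (hY : Integrable Y P) : Integrable (fun ω => ⟪X ω, Y ω⟫) P :=
  hXY.integrable_bilin hX hY (innerSL ℝ)

theorem IndepFun.integral_inner [CompleteSpace E] (hXY : IndepFun X Y P) (hX : Integrable X P)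
    (hY : Integrable Y P) : ∫ ω, ⟪X ω, Y ω⟫ ∂P = ⟪∫ ω, X ω ∂P, ∫ ω, Y ω ∂P⟫ :=
  hXY.integral_bilin hX hY (innerSL ℝ)

theorem IndepFun.integral_inner_sub_integral [CompleteSpace E] [IsProbabilityMeasure P]
    (hXY : IndepFun X Y P) (hX : Integrable X P) (hY : Integrable Y P) :
    ∫ ω, ⟪X ω, Y ω - ∫ ω', Y ω' ∂P⟫ ∂P = 0 := by
  have hYc : Integrable (fun ω => Y ω - ∫ ω', Y ω' ∂P) P := hY.sub (integrable_const _)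
  have hindep : IndepFun X (fun ω => Y ω - ∫ ω', Y ω' ∂P) P :=
    hXY.comp measurable_id (measurable_id.sub_const _)
  rw [hindep.integral_inner hX hYc, integral_sub hY (integrable_const _), integral_const,
    probReal_univ, one_smul, sub_self, inner_zero_right]

end ProbabilityTheory

theorem expected_bregman_independent_predictor_decomposition_general
    {E : Type*} [NormedAddCommGroup E] [InnerProductSpace ℝ E] [CompleteSpace E]
    [MeasurableSpace E] [BorelSpace E]
    (Ω : Set E)
    (φ : E → ℝ) (g : E → E)
    (hg : ∀ y ∈ Ω, HasGradientAt φ (g y) y)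
    {α : Type*} [MeasurableSpace α] (P : Measure α) [IsProbabilityMeasure P]
    (Z A : α → E) (hAΩ : ∀ ω, A ω ∈ Ω)
    (hindep : IndepFun Z A P)
    (hZ : Integrable Z P) (hφZ : Integrable (fun ω => φ (Z ω)) P)
    (hφA : Integrable (fun ω => φ (A ω)) P)
    (hgA : Integrable (fun ω => g (A ω)) P)
    (hgAA : Integrable (fun ω => ⟪g (A ω), A ω⟫) P)
    (μ : E) (hμ : μ = ∫ ω, Z ω ∂P) :
    ∫ ω, bregman φ g (Z ω) (A ω) ∂P
      = (∫ ω, bregman φ g (Z ω) μ ∂P) + ∫ ω, bregman φ g μ (A ω) ∂P := by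
  have hgA_eq : ∀ ω, g (A ω) = ∇ φ (A ω) := fun ω => ((hg _ (hAΩ ω)).gradient).symm
  have hindep' : IndepFun (fun ω => g μ - g (A ω)) Z P := by
    simp only [hgA_eq]
    exact hindep.symm.comp ((measurable_gradient φ).const_sub _) measurable_id
  have hgA' : Integrable (fun ω => g μ - g (A ω)) P := (integrable_const _).sub hgA
  have hcross : ∫ ω, ⟪g μ - g (A ω), Z ω - μ⟫ ∂P = 0 := by
    simpa only [← hμ] using hindep'.integral_inner_sub_integral hgA' hZ
  have hZμ : Integrable (fun ω => bregman φ g (Z ω) μ) P :=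
    integrable_bregman φ g hφZ (integrable_const _) (hZ.const_inner _) (integrable_const _)
  have hμA : Integrable (fun ω => bregman φ g μ (A ω)) P :=
    integrable_bregman φ g (integrable_const _) hφA (hgA.inner_const μ) hgAA
  have hcross_int : Integrable (fun ω => ⟪g μ - g (A ω), Z ω - μ⟫) P :=
    (hindep'.comp measurable_id (measurable_id.sub_const μ)).integrable_inner hgA'
      (hZ.sub (integrable_const μ))
  simp_rw [bregman_three_point φ g (Z _) μ (A _)]
  rw [integral_add (hZμ.fun_add hμA) hcross_int, integral_add hZμ hμA, hcross, add_zero]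

/-- Bias–variance type decomposition: the expected Bregman loss of an independent
random predictor `A` on a target `Z` splits into the Bayes error
`E[D_φ(Z, E[Z])]` plus the expected divergence from the target mean to the
predictor, `E[D_φ(E[Z], A)]`. -/
theorem expected_bregman_independent_predictor_decomposition
    {E : Type*} [NormedAddCommGroup E] [InnerProductSpace ℝ E] [CompleteSpace E]
    [MeasurableSpace E] [BorelSpace E]
    (Ω : Set E) (hΩo : IsOpen Ω) (hΩc : Convex ℝ Ω)
    (φ : E → ℝ) (g : E → E)
    (hφ : ConvexOn ℝ Ω φ)
    (hg : ∀ y ∈ Ω, HasGradientAt φ (g y) y)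
    {α : Type*} [MeasurableSpace α] (P : Measure α) [IsProbabilityMeasure P]
    (Z A : α → E) (hZΩ : ∀ ω, Z ω ∈ Ω) (hAΩ : ∀ ω, A ω ∈ Ω)
    (hindep : IndepFun Z A P)
    (hZ : Integrable Z P) (hφZ : Integrable (fun ω => φ (Z ω)) P)
    (hA : Integrable A P) (hφA : Integrable (fun ω => φ (A ω)) P)
    (hgA : Integrable (fun ω => g (A ω)) P)
    (hgAZ : Integrable (fun ω => ⟪g (A ω), Z ω⟫) P)
    (hgAA : Integrable (fun ω => ⟪g (A ω), A ω⟫) P)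
    (μ : E) (hμ : μ = ∫ ω, Z ω ∂P) (hμΩ : μ ∈ Ω) :
    ∫ ω, bregman φ g (Z ω) (A ω) ∂P
      = (∫ ω, bregman φ g (Z ω) μ ∂P) + ∫ ω, bregman φ g μ (A ω) ∂P :=
  expected_bregman_independent_predictor_decomposition_general Ω φ g hg P Z A hAΩ hindep hZ hφZ hφA
    hgA hgAA μ hμ
end

section
/- Let E be a real inner product space, Ω ⊆ E an open convex set, and φ : Ω → ℝ a differentiable strictly convex function with gradient ∇φ. Let Z be a random variable taking values in a set 𝒵, let T : 𝒵 → Ω be a measurable map that is injective, and assume T(𝒵) is convex, T(Z) and φ(T(Z)) are integrable, and E[T(Z)] ∈ T(𝒵) ∩ Ω. Then the in-space Bayes act for the pullback loss exists, is unique, and equals b* = T⁻¹(E[T(Z)]): for every b ∈ 𝒵, E[D_φ(T(Z), T(b))] ≥ E[D_φ(T(Z), T(b*))], with equality iff T(b) = E[T(Z)]. -/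
/-!
Averaging the Bregman divergence over `X` splits off the divergence from the mean:
`E[D_φ(X, y)] = E[D_φ(X, E X)] + D_φ(E X, y)`, because `D_φ(x, y)` is affine in `x`.
The excess loss of an act `b` is therefore `D_φ(E[T Z], T b)`, which is nonnegative and, by strict
convexity, vanishes only when `T b = E[T Z]`; injectivity of `T` then pins down `b`.
-/

open MeasureTheory
open scoped RealInnerProductSpace

section Convexity

variable {F : Type*} [NormedAddCommGroup F] [NormedSpace ℝ F]
  {s : Set F} {φ : F → ℝ} {φ' : F →L[ℝ] ℝ} {x y : F}

theorem ConvexOn.apply_sub_le_of_hasFDerivAt (hφ : ConvexOn ℝ s φ) (hd : HasFDerivAt φ φ' y)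
    (hx : x ∈ s) (hy : y ∈ s) : φ' (x - y) ≤ φ x - φ y := by
  set L : ℝ →ᵃ[ℝ] F := AffineMap.lineMap y x
  have hL : ConvexOn ℝ (L ⁻¹' s) (φ ∘ L) := hφ.comp_affineMap L
  have hL0 : L 0 = y := AffineMap.lineMap_apply_zero y x
  have hL1 : L 1 = x := AffineMap.lineMap_apply_one y x
  have hderiv : HasDerivAt (φ ∘ L) (φ' (x - y)) 0 := by
    rw [← hL0] at hd
    exact hd.comp_hasDerivAt 0 AffineMap.hasDerivAt_lineMap
  have := hL.le_slope_of_hasDerivAt (by simpa [hL0]) (by simpa [hL1]) zero_lt_one hderiv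
  simpa [slope, hL0, hL1] using this

-- The gradient inequality at the midpoint, against strict convexity along the chord.
theorem StrictConvexOn.apply_sub_lt_of_hasFDerivAt (hφ : StrictConvexOn ℝ s φ)
    (hd : HasFDerivAt φ φ' y) (hx : x ∈ s) (hy : y ∈ s) (hxy : x ≠ y) :
    φ' (x - y) < φ x - φ y := by
  set m : F := (1 / 2 : ℝ) • x + (1 / 2 : ℝ) • y
  have hm : m ∈ s := hφ.1 hx hy (by norm_num) (by norm_num) (by norm_num)
  have hmid : φ m < (1 / 2 : ℝ) • φ x + (1 / 2 : ℝ) • φ y :=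
    hφ.2 hx hy hxy (by norm_num) (by norm_num) (by norm_num)
  have htangent := hφ.convexOn.apply_sub_le_of_hasFDerivAt hd hm hy
  have hhalf : m - y = (1 / 2 : ℝ) • (x - y) := by module
  rw [hhalf, map_smul, smul_eq_mul] at htangent
  simp only [smul_eq_mul] at hmid
  linarith

end Convexity

section Bregman

variable {E : Type*} [NormedAddCommGroup E] [InnerProductSpace ℝ E]
  {s : Set E} {φ : E → ℝ} {g : E → E} {x y : E}

theorem bregman_self (φ : E → ℝ) (g : E → E) (x : E) : bregman φ g x x = 0 := by
  simp [bregman]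

variable [CompleteSpace E]

theorem bregman_nonneg (hφ : ConvexOn ℝ s φ) (hg : HasGradientAt φ (g y) y)
    (hx : x ∈ s) (hy : y ∈ s) : 0 ≤ bregman φ g x y := by
  have := hφ.apply_sub_le_of_hasFDerivAt hg.hasFDerivAt hx hy
  rw [InnerProductSpace.toDual_apply_apply] at this
  rw [bregman]
  linarith

theorem bregman_pos (hφ : StrictConvexOn ℝ s φ) (hg : HasGradientAt φ (g y) y)
    (hx : x ∈ s) (hy : y ∈ s) (hxy : x ≠ y) : 0 < bregman φ g x y := by
  have := hφ.apply_sub_lt_of_hasFDerivAt hg.hasFDerivAt hx hy hxy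
  rw [InnerProductSpace.toDual_apply_apply] at this
  rw [bregman]
  linarith

theorem bregman_eq_zero_iff (hφ : StrictConvexOn ℝ s φ) (hg : HasGradientAt φ (g y) y)
    (hx : x ∈ s) (hy : y ∈ s) : bregman φ g x y = 0 ↔ x = y := by
  refine ⟨fun h => ?_, fun h => h ▸ bregman_self φ g x⟩
  by_contra hxy
  exact (bregman_pos hφ hg hx hy hxy).ne' h

variable {α : Type*} [MeasurableSpace α] {μ : Measure α} [IsProbabilityMeasure μ] {X : α → E}

theorem integral_bregman (hX : Integrable X μ) (hφX : Integrable (fun ω => φ (X ω)) μ) (y : E) :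
    ∫ ω, bregman φ g (X ω) y ∂μ = (∫ ω, φ (X ω) ∂μ) - φ y - ⟪g y, (∫ ω, X ω ∂μ) - y⟫ := by
  have hsub : Integrable (fun ω => X ω - y) μ := hX.sub (integrable_const y)
  have hinner : Integrable (fun ω => ⟪g y, X ω - y⟫) μ := hsub.const_inner (g y)
  have hφX_sub : Integrable (fun ω => φ (X ω) - φ y) μ := hφX.sub (integrable_const _)
  simp only [bregman]
  rw [integral_sub hφX_sub hinner, integral_sub hφX (integrable_const _),
    integral_inner hsub, integral_sub hX (integrable_const y)]
  simp

theorem integral_bregman_eq_integral_bregman_integral_add (hX : Integrable X μ)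
    (hφX : Integrable (fun ω => φ (X ω)) μ) (y : E) :
    ∫ ω, bregman φ g (X ω) y ∂μ
      = (∫ ω, bregman φ g (X ω) (∫ ω, X ω ∂μ) ∂μ) + bregman φ g (∫ ω, X ω ∂μ) y := by
  rw [integral_bregman hX hφX, integral_bregman hX hφX, bregman]
  simp only [sub_self, inner_zero_right]
  ring

end Bregman

theorem inspace_bayes_act_pullback_bregman_general
    {E : Type*} [NormedAddCommGroup E] [InnerProductSpace ℝ E] [CompleteSpace E]
    (Ω : Set E)
    (φ : E → ℝ) (g : E → E)
    (hφ : StrictConvexOn ℝ Ω φ)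
    (hg : ∀ y ∈ Ω, HasGradientAt φ (g y) y)
    {ζ : Type*}
    {α : Type*} [MeasurableSpace α] (P : Measure α) [IsProbabilityMeasure P]
    (Z : α → ζ)
    (T : ζ → E) (hTinj : Function.Injective T)
    (hTΩ : ∀ z, T z ∈ Ω)
    (hTZ : Integrable (fun ω => T (Z ω)) P)
    (hφTZ : Integrable (fun ω => φ (T (Z ω))) P)
    (hmean : (∫ ω, T (Z ω) ∂P) ∈ Set.range T ∩ Ω) :
    ∃ bstar : ζ, T bstar = (∫ ω, T (Z ω) ∂P) ∧
      (∀ b : ζ, (∫ ω, bregman φ g (T (Z ω)) (T bstar) ∂P)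
        ≤ ∫ ω, bregman φ g (T (Z ω)) (T b) ∂P) ∧
      (∀ b : ζ, (∫ ω, bregman φ g (T (Z ω)) (T b) ∂P)
          = (∫ ω, bregman φ g (T (Z ω)) (T bstar) ∂P) ↔ T b = ∫ ω, T (Z ω) ∂P) ∧
      (∀ b : ζ, (∫ ω, bregman φ g (T (Z ω)) (T b) ∂P)
          = (∫ ω, bregman φ g (T (Z ω)) (T bstar) ∂P) → b = bstar) := by
  obtain ⟨⟨bstar, hbstar⟩, hmeanΩ⟩ := hmean
  have hsplit (b : ζ) := integral_bregman_eq_integral_bregman_integral_add (g := g) hTZ hφTZ (T b)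
  have heq_iff (b : ζ) : (∫ ω, bregman φ g (T (Z ω)) (T b) ∂P)
      = (∫ ω, bregman φ g (T (Z ω)) (T bstar) ∂P) ↔ T b = ∫ ω, T (Z ω) ∂P := by
    rw [hsplit b, hsplit bstar, hbstar, bregman_self, add_zero, add_eq_left,
      bregman_eq_zero_iff hφ (hg _ (hTΩ b)) hmeanΩ (hTΩ b), eq_comm]
  refine ⟨bstar, hbstar, fun b => ?_, heq_iff, fun b hb => hTinj ((heq_iff b).1 hb ▸ hbstar.symm)⟩
  rw [hsplit b, hsplit bstar, hbstar, bregman_self, add_zero]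
  exact le_add_of_nonneg_right (bregman_nonneg hφ.convexOn (hg _ (hTΩ b)) hmeanΩ (hTΩ b))

/-- For an injective measurable transformation `T` with convex image, the
in-space Bayes act for the pullback Bregman loss exists, is unique, and equals
`b* = T⁻¹(E[T(Z)])`. -/
theorem inspace_bayes_act_pullback_bregman
    {E : Type*} [NormedAddCommGroup E] [InnerProductSpace ℝ E] [CompleteSpace E]
    [MeasurableSpace E]
    (Ω : Set E) (hΩo : IsOpen Ω) (hΩc : Convex ℝ Ω)
    (φ : E → ℝ) (g : E → E)
    (hφ : StrictConvexOn ℝ Ω φ)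
    (hg : ∀ y ∈ Ω, HasGradientAt φ (g y) y)
    {ζ : Type*} [MeasurableSpace ζ]
    {α : Type*} [MeasurableSpace α] (P : Measure α) [IsProbabilityMeasure P]
    (Z : α → ζ) (hZmeas : Measurable Z)
    (T : ζ → E) (hTmeas : Measurable T) (hTinj : Function.Injective T)
    (hTΩ : ∀ z, T z ∈ Ω) (hTrange : Convex ℝ (Set.range T))
    (hTZ : Integrable (fun ω => T (Z ω)) P)
    (hφTZ : Integrable (fun ω => φ (T (Z ω))) P)
    (hmean : (∫ ω, T (Z ω) ∂P) ∈ Set.range T ∩ Ω) :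
    ∃ bstar : ζ, T bstar = (∫ ω, T (Z ω) ∂P) ∧
      (∀ b : ζ, (∫ ω, bregman φ g (T (Z ω)) (T bstar) ∂P)
        ≤ ∫ ω, bregman φ g (T (Z ω)) (T b) ∂P) ∧
      (∀ b : ζ, (∫ ω, bregman φ g (T (Z ω)) (T b) ∂P)
          = (∫ ω, bregman φ g (T (Z ω)) (T bstar) ∂P) ↔ T b = ∫ ω, T (Z ω) ∂P) ∧
      (∀ b : ζ, (∫ ω, bregman φ g (T (Z ω)) (T b) ∂P)
          = (∫ ω, bregman φ g (T (Z ω)) (T bstar) ∂P) → b = bstar) :=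
  inspace_bayes_act_pullback_bregman_general Ω φ g hφ hg P Z T hTinj hTΩ hTZ hφTZ hmean
end
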